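/- arXiv:1903.02933 — 5 statements merged into one kernel-verified Lean document; each statement's English description precedes it below -/
import Mathlib

section
/- Let C_pub^⊥ ⊆ F_{q^m}^n be spanned by the vectors g^{[i]} + γ h^{[i]} for i = 0,...,n−k−1, where g, h ∈ F_{q^m}^n and γ ∈ F_{q^m}. Then dim_{F_{q^m}} (C_pub^⊥ + (C_pub^⊥)^{[1]} + (C_pub^⊥)^{[2]}) ≤ 2(n−k) + 2. -/
open Module Polynomial

def frobV {L : Type*} [Field L] (q s : ℕ) {n : ℕ} (v : Fin n → L) : Fin n → L :=
  fun i => v i ^ q ^ s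

/-- The Gabidulin code of dimension `k` with support vector `a`: evaluations of
`q`-polynomials of `q`-degree `< k`, i.e. the span of the Frobenius powers of `a`. -/
def gab {L : Type*} [Field L] (q k : ℕ) {n : ℕ} (a : Fin n → L) : Submodule L (Fin n → L) :=
  Submodule.span L {v : Fin n → L | ∃ j < k, v = frobV q j a}

/-- Componentwise `q^s`-power Frobenius image of a code. -/
def frobCode {L : Type*} [Field L] (q s : ℕ) {n : ℕ} (C : Submodule L (Fin n → L)) :
    Submodule L (Fin n → L) :=
  Submodule.span L (frobV q s '' (C : Set (Fin n → L)))

/-- Dual code with respect to the standard bilinear form. -/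
def dualCode {L : Type*} [Field L] {n : ℕ} (C : Submodule L (Fin n → L)) :
    Submodule L (Fin n → L) where
  carrier := {x | ∀ c ∈ C, ∑ i, x i * c i = 0}
  add_mem' := by
    intro a b ha hb c hc
    simp only [Set.mem_setOf_eq] at *
    simp [add_mul, Finset.sum_add_distrib, ha c hc, hb c hc]
  zero_mem' := by intro c hc; simp
  smul_mem' := by
    intro r x hx c hc
    simp only [Set.mem_setOf_eq] at *
    simp [smul_eq_mul, mul_assoc, ← Finset.mul_sum, hx c hc]

section Aux

variable {L : Type*} [Field L] {n : ℕ}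

lemma frobV_frobV (q s t : ℕ) (v : Fin n → L) :
    frobV q s (frobV q t v) = frobV q (t + s) v := by
  funext i
  simp [frobV, ← pow_mul, ← pow_add]

lemma frobV_smul (q s : ℕ) (a : L) (v : Fin n → L) :
    frobV q s (a • v) = (a ^ q ^ s) • frobV q s v := by
  funext i
  simp [frobV, mul_pow]

lemma frobV_zero (q s : ℕ) (hq : 0 < q) : frobV q s (0 : Fin n → L) = 0 := by
  funext i
  simp [frobV, zero_pow (pow_pos hq s).ne']

lemma frobV_add (p : ℕ) [Fact p.Prime] [CharP L p] (e s : ℕ) (v w : Fin n → L) :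
    frobV (p ^ e) s (v + w) = frobV (p ^ e) s v + frobV (p ^ e) s w := by
  funext i
  simp only [frobV, Pi.add_apply, ← pow_mul, add_pow_char_pow]

lemma frobCode_span_le (p : ℕ) [Fact p.Prime] [CharP L p] (e s : ℕ)
    (S : Set (Fin n → L)) (T : Submodule L (Fin n → L))
    (hgen : ∀ v ∈ S, frobV (p ^ e) s v ∈ T) :
    frobCode (p ^ e) s (Submodule.span L S) ≤ T := by
  rw [frobCode, Submodule.span_le]
  rintro _ ⟨x, hx, rfl⟩
  simp only [SetLike.mem_coe] at hx ⊢
  induction hx using Submodule.span_induction with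
  | mem x hx => exact hgen x hx
  | zero =>
      rw [frobV_zero _ _ (pow_pos (Fact.out (p := p.Prime)).pos e)]
      exact T.zero_mem
  | add x y hx hy ihx ihy => rw [frobV_add]; exact T.add_mem ihx ihy
  | smul a x hx ih => rw [frobV_smul]; exact T.smul_mem _ ih

end Aux

/-- If `C_pub^⊥` is spanned by `g^{[i]} + γ h^{[i]}`, `i = 0, …, n-k-1`, then
`dim (C_pub^⊥ + (C_pub^⊥)^{[1]} + (C_pub^⊥)^{[2]}) ≤ 2(n-k) + 2`. -/
theorem distinguisher_dim_le {K L : Type*} [Field K] [Fintype K] [Field L] [Fintype L]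
    [Algebra K L] (n k : ℕ) (hkn : k < n) (hn : n ≤ Module.finrank K L)
    (g h : Fin n → L) (γ : L) (C : Submodule L (Fin n → L))
    (hC : C = Submodule.span L
      {v : Fin n → L | ∃ i < n - k,
        v = frobV (Fintype.card K) i g + γ • frobV (Fintype.card K) i h}) :
    Module.finrank L
      ↥(C ⊔ frobCode (Fintype.card K) 1 C ⊔ frobCode (Fintype.card K) 2 C)
      ≤ 2 * (n - k) + 2 := by
  classical
  set q := Fintype.card K with hq
  obtain ⟨p, hp⟩ := CharP.exists K
  haveI : Fact p.Prime := ⟨(CharP.char_is_prime K p)⟩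
  haveI : CharP L p := charP_of_injective_algebraMap (algebraMap K L).injective p
  obtain ⟨e, -, hcard⟩ := FiniteField.card K p
  set N := n - k with hN
  set u0 : Fin n → L := frobV q 0 g + γ • frobV q 0 h with hu0
  set vlast : Fin n → L := frobV q (N + 1) g + γ ^ q ^ 2 • frobV q (N + 1) h with hvlast
  set T : Finset (Fin n → L) :=
    ({u0} : Finset _) ∪ (Finset.Icc 1 N).image (fun i => frobV q i g)
      ∪ (Finset.Icc 1 N).image (fun i => frobV q i h) ∪ {vlast} with hT
  have hmemg : ∀ j, 1 ≤ j → j ≤ N → frobV q j g ∈ Submodule.span L (T : Set (Fin n → L)) := by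
    intro j h1 h2
    apply Submodule.subset_span
    simp only [hT, Finset.coe_union, Set.mem_union, Finset.mem_coe, Finset.mem_image]
    exact Or.inl (Or.inl (Or.inr ⟨j, Finset.mem_Icc.mpr ⟨h1, h2⟩, rfl⟩))
  have hmemh : ∀ j, 1 ≤ j → j ≤ N → frobV q j h ∈ Submodule.span L (T : Set (Fin n → L)) := by
    intro j h1 h2
    apply Submodule.subset_span
    simp only [hT, Finset.coe_union, Set.mem_union, Finset.mem_coe, Finset.mem_image]
    exact Or.inl (Or.inr ⟨j, Finset.mem_Icc.mpr ⟨h1, h2⟩, rfl⟩)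
  have hmid : ∀ j, 1 ≤ j → j ≤ N → ∀ c : L,
      frobV q j g + c • frobV q j h ∈ Submodule.span L (T : Set (Fin n → L)) := by
    intro j h1 h2 c
    exact Submodule.add_mem _ (hmemg j h1 h2) (Submodule.smul_mem _ _ (hmemh j h1 h2))
  have hgen : ∀ s : ℕ, s ≤ 2 → ∀ i < N,
      frobV q (i + s) g + γ ^ q ^ s • frobV q (i + s) h ∈
        Submodule.span L (T : Set (Fin n → L)) := by
    intro s hs i hi
    rcases Nat.eq_zero_or_pos (i + s) with h0 | hpos
    · obtain ⟨hi0, hs0⟩ := Nat.add_eq_zero.mp h0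
      subst hi0; subst hs0
      apply Submodule.subset_span
      simp only [hT, Finset.coe_union, Set.mem_union, Finset.mem_coe, Finset.mem_singleton]
      exact Or.inl (Or.inl (Or.inl (by simp [hu0, pow_zero, pow_one])))
    · rcases Nat.lt_or_ge (i + s) (N + 1) with hlt | hge
      · exact hmid (i + s) hpos (Nat.lt_succ_iff.mp hlt) _
      · have hs2 : s = 2 := by omega
        have hiN : i + s = N + 1 := by omega
        rw [hiN, hs2]
        apply Submodule.subset_span
        simp [hT, hvlast]
  have hCle : ∀ s : ℕ, s ≤ 2 →
      frobCode q s C ≤ Submodule.span L (T : Set (Fin n → L)) := by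
    intro s hs
    have hqe : q = p ^ (e : ℕ) := hq.trans hcard
    rw [hC, hqe]
    apply frobCode_span_le
    rintro v ⟨i, hi, rfl⟩
    rw [frobV_add p, frobV_smul, frobV_frobV, frobV_frobV, ← hqe]
    exact hgen s hs i hi
  have hC0 : C ≤ Submodule.span L (T : Set (Fin n → L)) := by
    rw [hC, Submodule.span_le]
    rintro v ⟨i, hi, rfl⟩
    have := hgen 0 (by omega) i hi
    simpa using this
  have hsup : C ⊔ frobCode q 1 C ⊔ frobCode q 2 C ≤
      Submodule.span L (T : Set (Fin n → L)) :=
    sup_le (sup_le hC0 (hCle 1 (by omega))) (hCle 2 (by omega))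
  calc Module.finrank L ↥(C ⊔ frobCode q 1 C ⊔ frobCode q 2 C)
      ≤ Module.finrank L ↥(Submodule.span L (T : Set (Fin n → L))) :=
        Submodule.finrank_mono hsup
    _ ≤ T.card := finrank_span_finset_le_card T
    _ ≤ 2 * N + 2 := by
        refine le_trans (Finset.card_union_le _ _) ?_
        have h1 := Finset.card_union_le (({u0} : Finset _) ∪
          (Finset.Icc 1 N).image (fun i => frobV q i g))
          ((Finset.Icc 1 N).image (fun i => frobV q i h))
        have h2 := Finset.card_union_le ({u0} : Finset _)
          ((Finset.Icc 1 N).image (fun i => frobV q i g))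
        have h3 := Finset.card_image_le (s := Finset.Icc 1 N) (f := fun i => frobV q i g)
        have h4 := Finset.card_image_le (s := Finset.Icc 1 N) (f := fun i => frobV q i h)
        have h5 : (Finset.Icc 1 N).card = N := by simp
        simp only [Finset.card_singleton] at *
        omega
end

section
/- Let r = n−k−1 and suppose Gab_{r+3}(g) ∩ Gab_{r+3}(h) = {0}, with g, h of rank at least r+3. Let C^⊥ be spanned over F_{q^m} by g^{[i]} + γ h^{[i]}, i = 0,...,r, for some γ ∈ F_{q^m}\F_q. Then (C^⊥ + (C^⊥)^{[1]}) ∩ ((C^⊥)^{[1]} + (C^⊥)^{[2]}) is spanned by g^{[1]} + γ^q h^{[1]}, g^{[2]}, h^{[2]}, ..., g^{[r]}, h^{[r]}, and g^{[r+1]} + γ^q h^{[r+1]}. -/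
open Module Polynomial

namespace Step1Aux

lemma frobV_add {L : Type*} [Field L] {q s n : ℕ}
    (hadd : ∀ (s : ℕ) (x y : L), (x + y) ^ q ^ s = x ^ q ^ s + y ^ q ^ s)
    (u v : Fin n → L) : frobV q s (u + v) = frobV q s u + frobV q s v := by
  funext j; simpa [frobV] using hadd s (u j) (v j)

lemma frobV_smul {L : Type*} [Field L] {q s n : ℕ} (c : L) (v : Fin n → L) :
    frobV q s (c • v) = c ^ q ^ s • frobV q s v := by
  funext j; simp [frobV, mul_pow]

lemma frobV_zero {L : Type*} [Field L] {q s n : ℕ} (hq : q ≠ 0) :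
    frobV q s (0 : Fin n → L) = 0 := by
  funext j; simp [frobV, zero_pow (pow_ne_zero s hq)]

lemma frobCode_span {L : Type*} [Field L] {q s n : ℕ} (hq : q ≠ 0)
    (hadd : ∀ (s : ℕ) (x y : L), (x + y) ^ q ^ s = x ^ q ^ s + y ^ q ^ s)
    (T : Set (Fin n → L)) :
    frobCode q s (Submodule.span L T) = Submodule.span L (frobV q s '' T) := by
  unfold frobCode
  apply le_antisymm
  · rw [Submodule.span_le]
    rintro _ ⟨c, hc, rfl⟩
    simp only [SetLike.mem_coe] at hc
    induction hc using Submodule.span_induction with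
    | mem x hx => exact Submodule.subset_span ⟨x, hx, rfl⟩
    | zero => rw [frobV_zero hq]; exact Submodule.zero_mem _
    | add x y hx hy ihx ihy => rw [frobV_add hadd]; exact Submodule.add_mem _ ihx ihy
    | smul c x hx ih => rw [frobV_smul]; exact Submodule.smul_mem _ _ ih
  · exact Submodule.span_mono (Set.image_mono Submodule.subset_span)

lemma aux_fix {K L : Type*} [Field K] [Fintype K] [Field L] [Fintype L] [Algebra K L]
    (x : L) (hx : x ^ Fintype.card K = x) : x ∈ Set.range (algebraMap K L) := by
  classical
  by_contra hmem
  set q := Fintype.card K with hqdef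
  have hq2 : 1 < q := Fintype.one_lt_card
  have hP : (X ^ q - X : L[X]) ≠ 0 := FiniteField.X_pow_card_sub_X_ne_zero L hq2
  have hdeg : (X ^ q - X : L[X]).natDegree = q := FiniteField.X_pow_card_sub_X_natDegree_eq L hq2
  set T : Finset L := insert x (Finset.univ.image (algebraMap K L)) with hT
  have hxT : x ∉ Finset.univ.image (algebraMap K L) := by
    intro hx'
    obtain ⟨c, -, rfl⟩ := Finset.mem_image.mp hx'
    exact hmem ⟨c, rfl⟩
  have hTcard : T.card = q + 1 := by
    rw [hT, Finset.card_insert_of_notMem hxT,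
      Finset.card_image_of_injective _ (algebraMap K L).injective, Finset.card_univ]
  have hroots : T ⊆ (X ^ q - X : L[X]).roots.toFinset := by
    intro y hy
    rw [Multiset.mem_toFinset, mem_roots hP, IsRoot.def, eval_sub, eval_pow, eval_X, sub_eq_zero]
    rcases Finset.mem_insert.mp hy with rfl | hy'
    · exact hx
    · obtain ⟨c, -, rfl⟩ := Finset.mem_image.mp hy'
      rw [← map_pow, FiniteField.pow_card]
  have : q + 1 ≤ q := by
    calc q + 1 = T.card := hTcard.symm
      _ ≤ (X ^ q - X : L[X]).roots.toFinset.card := Finset.card_le_card hroots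
      _ ≤ Multiset.card (X ^ q - X : L[X]).roots := Multiset.toFinset_card_le _
      _ ≤ (X ^ q - X : L[X]).natDegree := Polynomial.card_roots' _
      _ = q := hdeg
  omega


lemma aux_single {K L : Type*} [Field K] [Fintype K] [Field L] [Fintype L] [Algebra K L]
    (hadd : ∀ (s : ℕ) (x y : L),
      (x + y) ^ Fintype.card K ^ s = x ^ Fintype.card K ^ s + y ^ Fintype.card K ^ s)
    (hfix : ∀ (c : K) (s : ℕ),
      algebraMap K L c ^ Fintype.card K ^ s = algebraMap K L c)
    {n t : ℕ} (g : Fin n → L)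
    (hg : t ≤ Module.finrank K (Submodule.span K (Set.range g)))
    (d : ℕ → L)
    (h0 : ∑ i ∈ Finset.range t, d i • frobV (Fintype.card K) i g = 0) :
    ∀ i < t, d i = 0 := by
  classical
  set q := Fintype.card K with hqdef
  have hq2 : 1 < q := Fintype.one_lt_card
  set F : L → L := fun x => ∑ i ∈ Finset.range t, d i * x ^ q ^ i with hF
  have hFg : ∀ j, F (g j) = 0 := by
    intro j
    have := congrFun h0 j
    simpa [hF, frobV, Finset.sum_apply] using this
  set S : Submodule K L :=
    { carrier := {x | F x = 0}
      add_mem' := by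
        intro x y hx hy
        simp only [Set.mem_setOf_eq, hF] at *
        have : ∀ i ∈ Finset.range t,
            d i * (x + y) ^ q ^ i = d i * x ^ q ^ i + d i * y ^ q ^ i := by
          intro i _; rw [hadd, mul_add]
        rw [Finset.sum_congr rfl this, Finset.sum_add_distrib, hx, hy, add_zero]
      zero_mem' := by
        simp only [Set.mem_setOf_eq, hF]
        refine Finset.sum_eq_zero fun i _ => ?_
        rw [zero_pow (pow_ne_zero i (by omega : q ≠ 0)), mul_zero]
      smul_mem' := by
        intro c x hx
        simp only [Set.mem_setOf_eq, hF, Algebra.smul_def] at *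
        have : ∀ i ∈ Finset.range t,
            d i * (algebraMap K L c * x) ^ q ^ i
              = algebraMap K L c * (d i * x ^ q ^ i) := by
          intro i _; rw [mul_pow, hfix]; ring
        rw [Finset.sum_congr rfl this, ← Finset.mul_sum, hx, mul_zero] } with hS
  have hspan : Submodule.span K (Set.range g) ≤ S := by
    rw [Submodule.span_le]
    rintro _ ⟨j, rfl⟩
    exact hFg j
  have ht : t ≤ finrank K S := le_trans hg (Submodule.finrank_mono hspan)
  set f : L[X] := ∑ i ∈ Finset.range t, C (d i) * X ^ q ^ i with hfdef
  have hfeval : ∀ x : L, f.eval x = F x := by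
    intro x; simp [hfdef, hF, eval_finset_sum]
  have hf0 : f = 0 := by
    by_contra hf
    have ht1 : 1 ≤ t := by
      by_contra h't
      have : t = 0 := by omega
      exact hf (by simp [hfdef, this])
    have hdeg : f.natDegree ≤ q ^ (t - 1) := by
      refine Polynomial.natDegree_sum_le_of_forall_le _ _ fun i hi => ?_
      refine (Polynomial.natDegree_C_mul_le _ _).trans ?_
      rw [Polynomial.natDegree_X_pow]
      exact Nat.pow_le_pow_right (by omega) (by have := Finset.mem_range.mp hi; omega)
    haveI : Fintype S := Fintype.ofFinite S
    have hcard1 : Fintype.card S = q ^ finrank K S := card_eq_pow_finrank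
    have hinj : Function.Injective
        (fun x : S => (⟨(x : L), by
          rw [Multiset.mem_toFinset, mem_roots hf, IsRoot.def, hfeval]
          exact x.2⟩ : {y // y ∈ f.roots.toFinset})) := by
      intro a b hab
      exact Subtype.ext (by simpa [Subtype.mk.injEq] using hab)
    have hle : Fintype.card S ≤ f.roots.toFinset.card :=
      (Fintype.card_le_of_injective _ hinj).trans_eq (Fintype.card_coe _)
    have h1 : q ^ t ≤ q ^ (t - 1) := by
      calc q ^ t ≤ q ^ finrank K S := Nat.pow_le_pow_right (by omega) ht
        _ = Fintype.card S := hcard1.symm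
        _ ≤ f.roots.toFinset.card := hle
        _ ≤ Multiset.card f.roots := Multiset.toFinset_card_le _
        _ ≤ f.natDegree := Polynomial.card_roots' _
        _ ≤ q ^ (t - 1) := hdeg
    have h2 : q ^ (t - 1) < q ^ t := Nat.pow_lt_pow_right hq2 (by omega)
    omega
  intro i hi
  have hco := congrArg (fun P : L[X] => P.coeff (q ^ i)) hf0
  simp only [hfdef, Polynomial.finset_sum_coeff, Polynomial.coeff_C_mul,
    Polynomial.coeff_X_pow, Polynomial.coeff_zero, mul_ite, mul_one, mul_zero] at hco
  have hcong : ∀ j ∈ Finset.range t,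
      (if q ^ i = q ^ j then d j else 0) = (if i = j then d j else 0) := by
    intro j _
    congr 1
    exact propext ⟨fun e => Nat.pow_right_injective hq2 e, fun e => by rw [e]⟩
  rw [Finset.sum_congr rfl hcong, Finset.sum_ite_eq] at hco
  simpa [Finset.mem_range.mpr hi] using hco

lemma aux_pair {K L : Type*} [Field K] [Fintype K] [Field L] [Fintype L] [Algebra K L]
    (hadd : ∀ (s : ℕ) (x y : L),
      (x + y) ^ Fintype.card K ^ s = x ^ Fintype.card K ^ s + y ^ Fintype.card K ^ s)
    (hfix : ∀ (c : K) (s : ℕ),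
      algebraMap K L c ^ Fintype.card K ^ s = algebraMap K L c)
    {n r : ℕ} (g h : Fin n → L)
    (hgh : gab (Fintype.card K) (r + 3) g ⊓ gab (Fintype.card K) (r + 3) h = ⊥)
    (hg : r + 3 ≤ Module.finrank K (Submodule.span K (Set.range g)))
    (hh : r + 3 ≤ Module.finrank K (Submodule.span K (Set.range h)))
    (d e : ℕ → L)
    (h0 : ∑ i ∈ Finset.range (r + 3), d i • frobV (Fintype.card K) i g
        + ∑ i ∈ Finset.range (r + 3), e i • frobV (Fintype.card K) i h = 0) :
    ∀ i < r + 3, d i = 0 ∧ e i = 0 := by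
  have hvg : ∑ i ∈ Finset.range (r + 3), d i • frobV (Fintype.card K) i g
      ∈ gab (Fintype.card K) (r + 3) g :=
    Submodule.sum_smul_mem _ _ fun i hi =>
      Submodule.subset_span ⟨i, Finset.mem_range.mp hi, rfl⟩
  have hvh : ∑ i ∈ Finset.range (r + 3), e i • frobV (Fintype.card K) i h
      ∈ gab (Fintype.card K) (r + 3) h :=
    Submodule.sum_smul_mem _ _ fun i hi =>
      Submodule.subset_span ⟨i, Finset.mem_range.mp hi, rfl⟩
  have hneg : ∑ i ∈ Finset.range (r + 3), d i • frobV (Fintype.card K) i g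
      = -∑ i ∈ Finset.range (r + 3), e i • frobV (Fintype.card K) i h :=
    eq_neg_of_add_eq_zero_left h0
  have hmem : ∑ i ∈ Finset.range (r + 3), d i • frobV (Fintype.card K) i g
      ∈ gab (Fintype.card K) (r + 3) g ⊓ gab (Fintype.card K) (r + 3) h :=
    ⟨hvg, by rw [hneg]; exact Submodule.neg_mem _ hvh⟩
  rw [hgh, Submodule.mem_bot] at hmem
  have hz2 : ∑ i ∈ Finset.range (r + 3), e i • frobV (Fintype.card K) i h = 0 := by
    rw [hmem, zero_add] at h0; exact h0
  intro i hi
  exact ⟨aux_single hadd hfix g hg d hmem i hi, aux_single hadd hfix h hh e hz2 i hi⟩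

lemma pad_sum_shift {M : Type*} [AddCommMonoid M] {m N s : ℕ} (hmN : m + s ≤ N)
    (w : Fin m → M) (W : ℕ → M)
    (h1 : ∀ i : Fin m, W (↑i + s) = w i)
    (h2 : ∀ t, (t < s ∨ m + s ≤ t) → W t = 0) :
    ∑ i : Fin m, w i = ∑ t ∈ Finset.range N, W t := by
  calc ∑ i : Fin m, w i = ∑ i ∈ Finset.range m, W (s + i) := by
        rw [← Fin.sum_univ_eq_sum_range (fun i => W (s + i)) m]
        exact Finset.sum_congr rfl fun i _ => by rw [Nat.add_comm s ↑i, h1 i]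
    _ = ∑ t ∈ Finset.Ico s (m + s), W t := by
        rw [Finset.sum_Ico_eq_sum_range, Nat.add_sub_cancel]
    _ = ∑ t ∈ Finset.range N, W t := by
        refine Finset.sum_subset (fun t ht => Finset.mem_range.mpr ?_) (fun t htN htn => ?_)
        · have := Finset.mem_Ico.mp ht; omega
        · refine h2 t ?_
          have := Finset.mem_range.mp htN
          simp only [Finset.mem_Ico, not_and_or, not_le, not_lt] at htn
          omega

end Step1Aux

/-- With `r = n-k-1`, `Gab_{r+3}(g) ∩ Gab_{r+3}(h) = 0`, `g, h` of rank `≥ r+3` and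
`C^⊥ = ⟨g^{[i]} + γ h^{[i]} : 0 ≤ i ≤ r⟩`, the intersection
`(C^⊥ + (C^⊥)^{[1]}) ∩ ((C^⊥)^{[1]} + (C^⊥)^{[2]})` is spanned by
`g^{[1]} + γ^q h^{[1]}, g^{[2]}, h^{[2]}, …, g^{[r]}, h^{[r]}, g^{[r+1]} + γ^q h^{[r+1]}`. -/
theorem step1_intersection {K L : Type*} [Field K] [Fintype K] [Field L] [Fintype L]
    [Algebra K L] (n k r : ℕ) (hr : r = n - k - 1) (hkn : k < n)
    (hn : n ≤ Module.finrank K L) (g h : Fin n → L) (γ : L)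
    (hγ : γ ∉ Set.range (algebraMap K L))
    (hgh : gab (Fintype.card K) (r + 3) g ⊓ gab (Fintype.card K) (r + 3) h = ⊥)
    (hg : r + 3 ≤ Module.finrank K (Submodule.span K (Set.range g)))
    (hh : r + 3 ≤ Module.finrank K (Submodule.span K (Set.range h)))
    (C : Submodule L (Fin n → L))
    (hC : C = Submodule.span L
      {v : Fin n → L | ∃ i ≤ r,
        v = frobV (Fintype.card K) i g + γ • frobV (Fintype.card K) i h}) :
    (C ⊔ frobCode (Fintype.card K) 1 C)
        ⊓ (frobCode (Fintype.card K) 1 C ⊔ frobCode (Fintype.card K) 2 C)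
      = Submodule.span L
        ({frobV (Fintype.card K) 1 g + γ ^ Fintype.card K • frobV (Fintype.card K) 1 h,
          frobV (Fintype.card K) (r + 1) g
            + γ ^ Fintype.card K • frobV (Fintype.card K) (r + 1) h}
          ∪ {v : Fin n → L | ∃ i, 2 ≤ i ∧ i ≤ r ∧
              (v = frobV (Fintype.card K) i g ∨ v = frobV (Fintype.card K) i h)}) := by
  classical
  set q := Fintype.card K with hqdef
  -- characteristic facts
  obtain ⟨p, hpK⟩ := CharP.exists K
  haveI : CharP K p := hpK
  have hp : p.Prime := CharP.char_is_prime K p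
  haveI := Fact.mk hp
  obtain ⟨e, -, hcard⟩ := FiniteField.card K p
  haveI : CharP L p := charP_of_injective_algebraMap (algebraMap K L).injective p
  have hq2 : 1 < q := Fintype.one_lt_card
  have hq0 : q ≠ 0 := by omega
  have hadd : ∀ (s : ℕ) (x y : L), (x + y) ^ q ^ s = x ^ q ^ s + y ^ q ^ s := by
    intro s x y
    rw [hqdef, hcard, ← pow_mul]
    exact add_pow_char_pow x y p _
  have hfix : ∀ (c : K) (s : ℕ), algebraMap K L c ^ q ^ s = algebraMap K L c := by
    intro c s
    rw [← map_pow]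
    congr 1
    rw [hqdef]
    exact FiniteField.pow_card_pow s c
  have hsubpow : ∀ (x y : L), (x - y) ^ q = x ^ q - y ^ q := by
    intro x y
    rw [hqdef, hcard]
    exact sub_pow_char_pow x y _
  have hinj : ∀ x y : L, x ^ q = y ^ q → x = y := by
    intro x y hxy
    have hz : (x - y) ^ q = 0 := by rw [hsubpow, hxy, sub_self]
    exact sub_eq_zero.mp (pow_eq_zero_iff hq0 |>.mp hz)
  have hγq : γ ^ q ≠ γ := by
    intro hfixγ
    exact hγ (Step1Aux.aux_fix γ (by rw [← hqdef]; exact hfixγ))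
  have hγq2 : γ ^ q ^ 2 ≠ γ ^ q := by
    intro heq
    apply hγq
    apply hinj
    rw [← pow_mul, ← pow_two]
    exact heq
  -- the three vector families
  set a : ℕ → (Fin n → L) := fun i => frobV q i g + γ • frobV q i h with ha
  set b : ℕ → (Fin n → L) := fun i => frobV q i g + γ ^ q • frobV q i h with hb
  set c : ℕ → (Fin n → L) := fun i => frobV q i g + γ ^ q ^ 2 • frobV q i h with hcc
  have hfa : ∀ s i : ℕ, frobV q s (a i)
      = frobV q (i + s) g + γ ^ q ^ s • frobV q (i + s) h := by
    intro s i
    funext j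
    simp only [ha, frobV, Pi.add_apply, Pi.smul_apply, smul_eq_mul]
    rw [hadd s, mul_pow, ← pow_mul, ← pow_mul, ← pow_add]
  have hab : ∀ i : ℕ, frobV q 1 (a i) = b (i + 1) := by
    intro i
    rw [hfa 1 i, pow_one]
  have hac : ∀ i : ℕ, frobV q 2 (a i) = c (i + 2) := by
    intro i
    rw [hfa 2 i]
  -- span descriptions
  have hCr : C = Submodule.span L (Set.range fun i : Fin (r + 1) => a ↑i) := by
    rw [hC]
    congr 1
    ext v
    simp only [Set.mem_setOf_eq, Set.mem_range]
    constructor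
    · rintro ⟨i, hi, rfl⟩; exact ⟨⟨i, by omega⟩, rfl⟩
    · rintro ⟨i, rfl⟩; exact ⟨↑i, by omega, rfl⟩
  have hF1 : frobCode q 1 C = Submodule.span L (Set.range fun i : Fin (r + 1) => b (↑i + 1)) := by
    rw [hCr, Step1Aux.frobCode_span hq0 hadd]
    congr 1
    rw [← Set.range_comp]
    exact congrArg Set.range (funext fun i => hab ↑i)
  have hF2 : frobCode q 2 C = Submodule.span L (Set.range fun i : Fin (r + 1) => c (↑i + 2)) := by
    rw [hCr, Step1Aux.frobCode_span hq0 hadd]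
    congr 1
    rw [← Set.range_comp]
    exact congrArg Set.range (funext fun i => hac ↑i)
  have hA : C ⊔ frobCode q 1 C = Submodule.span L (Set.range
      (Sum.elim (fun i : Fin (r + 1) => a ↑i) (fun i : Fin (r + 1) => b (↑i + 1)))) := by
    rw [hF1, hCr, ← Submodule.span_union, Set.Sum.elim_range]
  have hB : frobCode q 1 C ⊔ frobCode q 2 C = Submodule.span L (Set.range
      (Sum.elim (fun i : Fin (r + 1) => b (↑i + 1)) (fun i : Fin (r + 1) => c (↑i + 2)))) := by
    rw [hF1, hF2, ← Submodule.span_union, Set.Sum.elim_range]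
  -- basic membership facts
  have haC : ∀ i : ℕ, i < r + 1 → a i ∈ C := by
    intro i hi
    rw [hCr]
    exact Submodule.subset_span ⟨⟨i, hi⟩, rfl⟩
  have hbF1 : ∀ i : ℕ, i < r + 1 → b (i + 1) ∈ frobCode q 1 C := by
    intro i hi
    rw [hF1]
    exact Submodule.subset_span ⟨⟨i, hi⟩, rfl⟩
  have hcF2 : ∀ i : ℕ, i < r + 1 → c (i + 2) ∈ frobCode q 2 C := by
    intro i hi
    rw [hF2]
    exact Submodule.subset_span ⟨⟨i, hi⟩, rfl⟩
  refine le_antisymm ?_ ?_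
  · -- hard direction
    intro x hx
    obtain ⟨hx1, hx2⟩ := Submodule.mem_inf.mp hx
    rw [hA, Submodule.mem_span_range_iff_exists_fun] at hx1
    rw [hB, Submodule.mem_span_range_iff_exists_fun] at hx2
    obtain ⟨cA, hcA⟩ := hx1
    obtain ⟨cB, hcB⟩ := hx2
    rw [Fintype.sum_sum_type] at hcA hcB
    simp only [Sum.elim_inl, Sum.elim_inr] at hcA hcB
    set α : ℕ → L := fun t => if ht : t < r + 1 then cA (Sum.inl ⟨t, ht⟩) else 0 with hα
    set βA : ℕ → L := fun t =>
      if ht : 1 ≤ t ∧ t < r + 2 then cA (Sum.inr ⟨t - 1, by omega⟩) else 0 with hβA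
    set βB : ℕ → L := fun t =>
      if ht : 1 ≤ t ∧ t < r + 2 then cB (Sum.inl ⟨t - 1, by omega⟩) else 0 with hβB
    set δ : ℕ → L := fun t =>
      if ht : 2 ≤ t ∧ t < r + 3 then cB (Sum.inr ⟨t - 2, by omega⟩) else 0 with hδ
    have eA1 : ∑ i : Fin (r + 1), cA (Sum.inl i) • a ↑i
        = ∑ t ∈ Finset.range (r + 3), α t • a t := by
      refine Step1Aux.pad_sum_shift (m := r + 1) (N := r + 3) (s := 0) (by omega) _ _ (fun i => ?_) (fun t ht => ?_)
      · simp only [hα, Nat.add_zero, i.isLt, dif_pos]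
      · have : ¬ t < r + 1 := by omega
        simp only [hα, this, dif_neg, not_false_iff, zero_smul]
    have eA2 : ∑ i : Fin (r + 1), cA (Sum.inr i) • b (↑i + 1)
        = ∑ t ∈ Finset.range (r + 3), βA t • b t := by
      refine Step1Aux.pad_sum_shift (m := r + 1) (N := r + 3) (s := 1) (by omega) _ _ (fun i => ?_) (fun t ht => ?_)
      · have hval : βA (↑i + 1) = cA (Sum.inr i) := by
          have hc : 1 ≤ (i : ℕ) + 1 ∧ (i : ℕ) + 1 < r + 2 := ⟨by omega, by omega⟩
          simp only [hβA]
          rw [dif_pos hc]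
          exact congrArg cA (congrArg Sum.inr (Fin.ext (by simp)))
        rw [hval]
      · have : ¬ (1 ≤ t ∧ t < r + 2) := by omega
        simp only [hβA, this, dif_neg, not_false_iff, zero_smul]
    have eB1 : ∑ i : Fin (r + 1), cB (Sum.inl i) • b (↑i + 1)
        = ∑ t ∈ Finset.range (r + 3), βB t • b t := by
      refine Step1Aux.pad_sum_shift (m := r + 1) (N := r + 3) (s := 1) (by omega) _ _ (fun i => ?_) (fun t ht => ?_)
      · have hval : βB (↑i + 1) = cB (Sum.inl i) := by
          have hc : 1 ≤ (i : ℕ) + 1 ∧ (i : ℕ) + 1 < r + 2 := ⟨by omega, by omega⟩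
          simp only [hβB]
          rw [dif_pos hc]
          exact congrArg cB (congrArg Sum.inl (Fin.ext (by simp)))
        rw [hval]
      · have : ¬ (1 ≤ t ∧ t < r + 2) := by omega
        simp only [hβB, this, dif_neg, not_false_iff, zero_smul]
    have eB2 : ∑ i : Fin (r + 1), cB (Sum.inr i) • c (↑i + 2)
        = ∑ t ∈ Finset.range (r + 3), δ t • c t := by
      refine Step1Aux.pad_sum_shift (m := r + 1) (N := r + 3) (s := 2) (by omega) _ _ (fun i => ?_) (fun t ht => ?_)
      · have hval : δ (↑i + 2) = cB (Sum.inr i) := by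
          have hc : 2 ≤ (i : ℕ) + 2 ∧ (i : ℕ) + 2 < r + 3 := ⟨by omega, by omega⟩
          simp only [hδ]
          rw [dif_pos hc]
          exact congrArg cB (congrArg Sum.inr (Fin.ext (by simp)))
        rw [hval]
      · have : ¬ (2 ≤ t ∧ t < r + 3) := by omega
        simp only [hδ, this, dif_neg, not_false_iff, zero_smul]
    rw [eA1, eA2] at hcA
    rw [eB1, eB2] at hcB
    -- the linear relation
    have hterm : ∀ t ∈ Finset.range (r + 3),
        (α t + (βA t - βB t) - δ t) • frobV q t g
          + (γ * α t + γ ^ q * (βA t - βB t) - γ ^ q ^ 2 * δ t) • frobV q t h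
        = (α t • a t + βA t • b t) - (βB t • b t + δ t • c t) := by
      intro t _
      simp only [ha, hb, hcc]
      module
    have hzero : ∑ t ∈ Finset.range (r + 3), (α t + (βA t - βB t) - δ t) • frobV q t g
        + ∑ t ∈ Finset.range (r + 3),
            (γ * α t + γ ^ q * (βA t - βB t) - γ ^ q ^ 2 * δ t) • frobV q t h = 0 := by
      rw [← Finset.sum_add_distrib, Finset.sum_congr rfl hterm, Finset.sum_sub_distrib,
        Finset.sum_add_distrib, Finset.sum_add_distrib, hcA, hcB, sub_self]
    have hco := Step1Aux.aux_pair hadd hfix g h hgh hg hh _ _ hzero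
    have hδ0 : δ 0 = 0 := by
      have : ¬ (2 ≤ 0 ∧ 0 < r + 3) := by omega
      simp only [hδ, this, dif_neg, not_false_iff]
    have hδ1 : δ 1 = 0 := by
      have : ¬ (2 ≤ 1 ∧ 1 < r + 3) := by omega
      simp only [hδ, this, dif_neg, not_false_iff]
    have hβA0 : βA 0 = 0 := by
      have : ¬ (1 ≤ 0 ∧ 0 < r + 2) := by omega
      simp only [hβA, this, dif_neg, not_false_iff]
    have hβB0 : βB 0 = 0 := by
      have : ¬ (1 ≤ 0 ∧ 0 < r + 2) := by omega
      simp only [hβB, this, dif_neg, not_false_iff]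
    have hα0 : α 0 = 0 := by
      have hd := (hco 0 (by omega)).1
      rw [hβA0, hβB0, hδ0] at hd
      simpa using hd
    have hα1 : α 1 = 0 := by
      have hd := (hco 1 (by omega)).1
      have he := (hco 1 (by omega)).2
      have hmul : (γ - γ ^ q) * α 1 = 0 := by
        linear_combination he - γ ^ q * hd + (γ ^ q ^ 2 - γ ^ q) * hδ1
      rcases mul_eq_zero.mp hmul with hz | hz
      · exact absurd (sub_eq_zero.mp hz) (Ne.symm hγq)
      · exact hz
    -- now show x is in the span
    rw [← hcA]
    refine Submodule.add_mem _ (Submodule.sum_mem _ fun t ht => ?_)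
      (Submodule.sum_mem _ fun t ht => ?_)
    · -- α t • a t
      by_cases h0 : t = 0
      · subst h0; rw [hα0, zero_smul]; exact Submodule.zero_mem _
      by_cases h1 : t = 1
      · subst h1; rw [hα1, zero_smul]; exact Submodule.zero_mem _
      by_cases hbig : r + 1 ≤ t
      · have : ¬ t < r + 1 := by omega
        rw [hα]
        simp only [this, dif_neg, not_false_iff, zero_smul]
        exact Submodule.zero_mem _
      · -- 2 ≤ t ≤ r
        refine Submodule.smul_mem _ _ ?_
        have hgmem : frobV q t g ∈ Submodule.span L
            (({frobV q 1 g + γ ^ q • frobV q 1 h,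
              frobV q (r + 1) g + γ ^ q • frobV q (r + 1) h} : Set (Fin n → L))
              ∪ {v : Fin n → L | ∃ i, 2 ≤ i ∧ i ≤ r ∧
                  (v = frobV q i g ∨ v = frobV q i h)}) :=
          Submodule.subset_span (Or.inr ⟨t, by omega, by omega, Or.inl rfl⟩)
        have hhmem : frobV q t h ∈ Submodule.span L
            (({frobV q 1 g + γ ^ q • frobV q 1 h,
              frobV q (r + 1) g + γ ^ q • frobV q (r + 1) h} : Set (Fin n → L))
              ∪ {v : Fin n → L | ∃ i, 2 ≤ i ∧ i ≤ r ∧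
                  (v = frobV q i g ∨ v = frobV q i h)}) :=
          Submodule.subset_span (Or.inr ⟨t, by omega, by omega, Or.inr rfl⟩)
        exact Submodule.add_mem _ hgmem (Submodule.smul_mem _ _ hhmem)
    · -- βA t • b t
      by_cases h0 : t = 0
      · subst h0; rw [hβA0, zero_smul]; exact Submodule.zero_mem _
      by_cases h1 : t = 1
      · subst h1
        refine Submodule.smul_mem _ _ (Submodule.subset_span ?_)
        exact Or.inl (Set.mem_insert _ _)
      by_cases hr1 : t = r + 1
      · subst hr1
        refine Submodule.smul_mem _ _ (Submodule.subset_span ?_)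
        exact Or.inl (Set.mem_insert_of_mem _ rfl)
      by_cases hbig : r + 2 ≤ t
      · have : ¬ (1 ≤ t ∧ t < r + 2) := by omega
        rw [hβA]
        simp only [this, dif_neg, not_false_iff, zero_smul]
        exact Submodule.zero_mem _
      · -- 2 ≤ t ≤ r
        refine Submodule.smul_mem _ _ ?_
        have hgmem : frobV q t g ∈ Submodule.span L
            (({frobV q 1 g + γ ^ q • frobV q 1 h,
              frobV q (r + 1) g + γ ^ q • frobV q (r + 1) h} : Set (Fin n → L))
              ∪ {v : Fin n → L | ∃ i, 2 ≤ i ∧ i ≤ r ∧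
                  (v = frobV q i g ∨ v = frobV q i h)}) :=
          Submodule.subset_span (Or.inr ⟨t, by omega, by omega, Or.inl rfl⟩)
        have hhmem : frobV q t h ∈ Submodule.span L
            (({frobV q 1 g + γ ^ q • frobV q 1 h,
              frobV q (r + 1) g + γ ^ q • frobV q (r + 1) h} : Set (Fin n → L))
              ∪ {v : Fin n → L | ∃ i, 2 ≤ i ∧ i ≤ r ∧
                  (v = frobV q i g ∨ v = frobV q i h)}) :=
          Submodule.subset_span (Or.inr ⟨t, by omega, by omega, Or.inr rfl⟩)
        exact Submodule.add_mem _ hgmem (Submodule.smul_mem _ _ hhmem)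
  · -- easy direction
    rw [Submodule.span_le]
    rintro v hv
    have hP1b : ∀ i : ℕ, 1 ≤ i → i ≤ r + 1 → b i ∈ C ⊔ frobCode q 1 C := by
      intro i h1 h2
      have := hbF1 (i - 1) (by omega)
      have hi : i - 1 + 1 = i := by omega
      rw [hi] at this
      exact Submodule.mem_sup_right this
    have hP2b : ∀ i : ℕ, 1 ≤ i → i ≤ r + 1 → b i ∈ frobCode q 1 C ⊔ frobCode q 2 C := by
      intro i h1 h2
      have := hbF1 (i - 1) (by omega)
      have hi : i - 1 + 1 = i := by omega
      rw [hi] at this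
      exact Submodule.mem_sup_left this
    rcases hv with hv | ⟨i, hi2, hir, hv⟩
    · -- v ∈ {v1, v2}
      rcases hv with rfl | hv
      · exact Submodule.mem_inf.mpr ⟨hP1b 1 (by omega) (by omega), hP2b 1 (by omega) (by omega)⟩
      · rw [Set.mem_singleton_iff] at hv
        subst hv
        exact Submodule.mem_inf.mpr
          ⟨hP1b (r + 1) (by omega) (by omega), hP2b (r + 1) (by omega) (by omega)⟩
    · -- middle generators
      have hP1a : a i ∈ C ⊔ frobCode q 1 C := Submodule.mem_sup_left (haC i (by omega))
      have hP1bi : b i ∈ C ⊔ frobCode q 1 C := hP1b i (by omega) (by omega)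
      have hP2bi : b i ∈ frobCode q 1 C ⊔ frobCode q 2 C := hP2b i (by omega) (by omega)
      have hP2c : c i ∈ frobCode q 1 C ⊔ frobCode q 2 C := by
        have := hcF2 (i - 2) (by omega)
        have hi : i - 2 + 2 = i := by omega
        rw [hi] at this
        exact Submodule.mem_sup_right this
      have hne1 : γ ^ q - γ ≠ 0 := sub_ne_zero.mpr hγq
      have hne2 : γ ^ q ^ 2 - γ ^ q ≠ 0 := sub_ne_zero.mpr hγq2
      have keyg1 : (γ ^ q - γ) • frobV q i g = γ ^ q • a i - γ • b i := by
        simp only [ha, hb]; module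
      have keyh1 : (γ ^ q - γ) • frobV q i h = b i - a i := by
        simp only [ha, hb]; module
      have keyg2 : (γ ^ q ^ 2 - γ ^ q) • frobV q i g = γ ^ q ^ 2 • b i - γ ^ q • c i := by
        simp only [hb, hcc]; module
      have keyh2 : (γ ^ q ^ 2 - γ ^ q) • frobV q i h = c i - b i := by
        simp only [hb, hcc]; module
      have hgP1 : frobV q i g ∈ C ⊔ frobCode q 1 C := by
        have hm : (γ ^ q - γ) • frobV q i g ∈ C ⊔ frobCode q 1 C := by
          rw [keyg1]
          exact Submodule.sub_mem _ (Submodule.smul_mem _ _ hP1a) (Submodule.smul_mem _ _ hP1bi)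
        have := Submodule.smul_mem _ (γ ^ q - γ)⁻¹ hm
        rwa [inv_smul_smul₀ hne1] at this
      have hhP1 : frobV q i h ∈ C ⊔ frobCode q 1 C := by
        have hm : (γ ^ q - γ) • frobV q i h ∈ C ⊔ frobCode q 1 C := by
          rw [keyh1]
          exact Submodule.sub_mem _ hP1bi hP1a
        have := Submodule.smul_mem _ (γ ^ q - γ)⁻¹ hm
        rwa [inv_smul_smul₀ hne1] at this
      have hgP2 : frobV q i g ∈ frobCode q 1 C ⊔ frobCode q 2 C := by
        have hm : (γ ^ q ^ 2 - γ ^ q) • frobV q i g ∈ frobCode q 1 C ⊔ frobCode q 2 C := by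
          rw [keyg2]
          exact Submodule.sub_mem _ (Submodule.smul_mem _ _ hP2bi) (Submodule.smul_mem _ _ hP2c)
        have := Submodule.smul_mem _ (γ ^ q ^ 2 - γ ^ q)⁻¹ hm
        rwa [inv_smul_smul₀ hne2] at this
      have hhP2 : frobV q i h ∈ frobCode q 1 C ⊔ frobCode q 2 C := by
        have hm : (γ ^ q ^ 2 - γ ^ q) • frobV q i h ∈ frobCode q 1 C ⊔ frobCode q 2 C := by
          rw [keyh2]
          exact Submodule.sub_mem _ hP2c hP2bi
        have := Submodule.smul_mem _ (γ ^ q ^ 2 - γ ^ q)⁻¹ hm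
        rwa [inv_smul_smul₀ hne2] at this
      rcases hv with rfl | rfl
      · exact Submodule.mem_inf.mpr ⟨hgP1, hgP2⟩
      · exact Submodule.mem_inf.mpr ⟨hhP1, hhP2⟩
end

section
/- Let γ ∈ F_{q^m}\F_q, and let g, h ∈ F_{q^m}^n. Let a, b, c, d ∈ F_q with ad − bc ≠ 0 and let δ ∈ F_{q^m} satisfy γ = (aδ + b)/(cδ + d). Then for every i ≥ 0, the F_{q^m}-span of g^{[i]} + γ h^{[i]} equals the F_{q^m}-span of (dg + bh)^{[i]} + δ (cg + ah)^{[i]}. In particular the code spanned by { g^{[i]} + γ h^{[i]} : i = 0,...,n−k−1 } equals the code spanned by { (dg+bh)^{[i]} + δ (cg+ah)^{[i]} : i = 0,...,n−k−1 }. -/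
open Module Polynomial

/-! Since `Fintype.card K = q` and Frobenius fixes `K`, the map `v ↦ v^{[i]}` is `K`-linear, so
`(dg + bh)^{[i]} + δ (cg + ah)^{[i]} = (cδ + d) • (g^{[i]} + γ h^{[i]})` by the relation
`γ (cδ + d) = aδ + b`. Scaling spanning vectors by the unit `cδ + d` does not change the span. -/

open scoped Pointwise

section

variable (K : Type*) {L : Type*} [Field K] [Fintype K] [Field L] [Algebra K L]

def frobVLinearMap (n s : ℕ) : (Fin n → L) →ₗ[K] (Fin n → L) :=
  (FiniteField.frobeniusAlgHom K L ^ s).toLinearMap.compLeft (Fin n)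

theorem frobVLinearMap_apply {n : ℕ} (s : ℕ) (v : Fin n → L) :
    frobVLinearMap K n s v = frobV (Fintype.card K) s v := by
  funext j
  simp only [frobVLinearMap, LinearMap.compLeft, AlgHom.coe_toLinearMap, AlgHom.coe_pow,
    FiniteField.coe_frobeniusAlgHom, pow_iterate, LinearMap.coe_mk, AddHom.coe_mk,
    Function.comp_apply, frobV]

end

theorem smul_add_smul_add_smul_eq {R M : Type*} [CommRing R] [AddCommGroup M] [Module R M]
    {a b c d γ δ : R} (hγ : γ * (c * δ + d) = a * δ + b) (u w : M) :
    (d • u + b • w) + δ • (c • u + a • w) = (c * δ + d) • (u + γ • w) := by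
  linear_combination (norm := module) -(hγ • w)

theorem Submodule.span_setOf_exists_eq_smul {R M ι : Type*} [Semiring R] [AddCommMonoid M]
    [Module R M] (P : ι → Prop) (f : ι → M) {r : R} (hr : IsUnit r) :
    span R {v | ∃ i, P i ∧ v = r • f i} = span R {v | ∃ i, P i ∧ v = f i} := by
  rw [← span_smul_eq_of_isUnit {v | ∃ i, P i ∧ v = f i} r hr]
  congr 1
  ext v
  simp only [Set.mem_smul_set, Set.mem_ofPred_eq]
  constructor
  · rintro ⟨i, hi, rfl⟩
    exact ⟨f i, ⟨i, hi, rfl⟩, rfl⟩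
  · rintro ⟨_, ⟨i, hi, rfl⟩, rfl⟩
    exact ⟨i, hi, rfl⟩

theorem pgl2_action_on_triples_general {K L : Type*} [Field K] [Fintype K] [Field L]
    [Algebra K L] (n k : ℕ) (g h : Fin n → L) (γ δ : L) (a b c d : K)
    (hcd : algebraMap K L c * δ + algebraMap K L d ≠ 0)
    (hγ : γ = (algebraMap K L a * δ + algebraMap K L b)
              / (algebraMap K L c * δ + algebraMap K L d)) :
    (∀ i : ℕ,
      Submodule.span L {frobV (Fintype.card K) i g + γ • frobV (Fintype.card K) i h}
        = Submodule.span L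
            {frobV (Fintype.card K) i (d • g + b • h)
              + δ • frobV (Fintype.card K) i (c • g + a • h)}) ∧
    Submodule.span L
        {v : Fin n → L | ∃ i < n - k,
          v = frobV (Fintype.card K) i g + γ • frobV (Fintype.card K) i h}
      = Submodule.span L
        {v : Fin n → L | ∃ i < n - k,
          v = frobV (Fintype.card K) i (d • g + b • h)
                + δ • frobV (Fintype.card K) i (c • g + a • h)} := by
  set u := algebraMap K L c * δ + algebraMap K L d
  have hu : IsUnit u := isUnit_iff_ne_zero.mpr hcd
  have hγu : γ * u = algebraMap K L a * δ + algebraMap K L b := by rw [hγ, div_mul_cancel₀ _ hcd]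
  have hscale : ∀ i, frobV (Fintype.card K) i (d • g + b • h)
      + δ • frobV (Fintype.card K) i (c • g + a • h)
      = u • (frobV (Fintype.card K) i g + γ • frobV (Fintype.card K) i h) := fun i => by
    simp only [← frobVLinearMap_apply K, map_add, map_smul]
    simp only [← algebraMap_smul L (_ : K)]
    exact smul_add_smul_add_smul_eq hγu _ _
  simp_rw [hscale]
  refine ⟨fun i => ?_, (Submodule.span_setOf_exists_eq_smul _ _ hu).symm⟩
  rw [← Set.smul_set_singleton, Submodule.span_smul_eq_of_isUnit _ _ hu]

/-- Action of `PGL₂(F_q)` on triples `(γ, g, h)`: if `γ = (aδ+b)/(cδ+d)` with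
`a, b, c, d ∈ F_q`, `ad - bc ≠ 0`, then for every `i` the span of `g^{[i]} + γ h^{[i]}`
equals the span of `(dg+bh)^{[i]} + δ (cg+ah)^{[i]}`, and the two codes spanned by these
vectors for `i = 0, …, n-k-1` coincide. -/
theorem pgl2_action_on_triples {K L : Type*} [Field K] [Fintype K] [Field L] [Fintype L]
    [Algebra K L] (n k : ℕ) (g h : Fin n → L) (γ δ : L) (a b c d : K)
    (had : a * d - b * c ≠ 0)
    (hγF : γ ∉ Set.range (algebraMap K L))
    (hcd : algebraMap K L c * δ + algebraMap K L d ≠ 0)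
    (hγ : γ = (algebraMap K L a * δ + algebraMap K L b)
              / (algebraMap K L c * δ + algebraMap K L d)) :
    (∀ i : ℕ,
      Submodule.span L {frobV (Fintype.card K) i g + γ • frobV (Fintype.card K) i h}
        = Submodule.span L
            {frobV (Fintype.card K) i (d • g + b • h)
              + δ • frobV (Fintype.card K) i (c • g + a • h)}) ∧
    Submodule.span L
        {v : Fin n → L | ∃ i < n - k,
          v = frobV (Fintype.card K) i g + γ • frobV (Fintype.card K) i h}
      = Submodule.span L
        {v : Fin n → L | ∃ i < n - k,
          v = frobV (Fintype.card K) i (d • g + b • h)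
                + δ • frobV (Fintype.card K) i (c • g + a • h)} :=
  pgl2_action_on_triples_general n k g h γ δ a b c d hcd hγ
end

section
/- Let Q(X) = (X^q − X^{q^3})(X − X^{q^2}) − β (X − X^{q^3})(X^q − X^{q^2}) for some β ∈ F_{q^m}. Then (X^q − X)^{q+1} divides Q(X) in F_{q^m}[X]. -/
open Module Polynomial

/-! Write `F = X^q - X`. Telescoping `X^(q^(k+1)) - X = ((X^(q^k))^q - X^q) + F` shows that `F`
divides `X^(q^k) - X` for every `k`; raising this to the `q`-th power, which is a ring endomorphism
of any algebra over `𝔽_q`, shows that `F^q` divides `X^(q^(k+1)) - X^q`. In each of the two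
products making up `Q`, one factor is therefore divisible by `F` and the other by `F^q`. -/

theorem X_pow_sub_X_dvd_X_pow_pow_sub_X {R : Type*} [CommRing R] (q k : ℕ) :
    (X ^ q - X : R[X]) ∣ X ^ q ^ k - X := by
  induction k with
  | zero => simp
  | succ k ih =>
    have hsplit : (X : R[X]) ^ q ^ (k + 1) - X = ((X ^ q ^ k) ^ q - X ^ q) + (X ^ q - X) := by
      rw [← pow_mul, ← pow_succ]; ring
    rw [hsplit]
    exact dvd_add (ih.trans (sub_dvd_pow_sub_pow _ _ q)) dvd_rfl

theorem sub_pow_card {K R : Type*} [Field K] [Fintype K] [CommRing R] [Algebra K R] (a b : R) :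
    (a - b) ^ Fintype.card K = a ^ Fintype.card K - b ^ Fintype.card K :=
  map_sub (FiniteField.frobeniusAlgHom K R) a b

theorem X_pow_sub_X_pow_card_dvd_X_pow_pow_succ_sub_X_pow {K R : Type*} [Field K] [Fintype K] [CommRing R] [Algebra K R]
    (k : ℕ) :
    (X ^ Fintype.card K - X : R[X]) ^ Fintype.card K ∣
      X ^ Fintype.card K ^ (k + 1) - X ^ Fintype.card K := by
  rw [pow_succ, pow_mul, ← sub_pow_card]
  exact pow_dvd_pow_of_dvd (X_pow_sub_X_dvd_X_pow_pow_sub_X _ k) _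

theorem pow_frob_dvd_Q_general {K L : Type*} [Field K] [Fintype K] [Field L]
    [Algebra K L] (β : L) :
    ((X ^ Fintype.card K - X) ^ (Fintype.card K + 1) : L[X])
      ∣ ((X ^ Fintype.card K - X ^ Fintype.card K ^ 3) * (X - X ^ Fintype.card K ^ 2)
          - C β * (X - X ^ Fintype.card K ^ 3) * (X ^ Fintype.card K - X ^ Fintype.card K ^ 2)) := by
  set q := Fintype.card K
  have hA : (X ^ q - X : L[X]) ^ q ∣ X ^ q - X ^ q ^ 3 :=
    dvd_sub_comm.mp (X_pow_sub_X_pow_card_dvd_X_pow_pow_succ_sub_X_pow (K := K) 2)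
  have hB : (X ^ q - X : L[X]) ∣ X - X ^ q ^ 2 :=
    dvd_sub_comm.mp (X_pow_sub_X_dvd_X_pow_pow_sub_X q 2)
  have hC : (X ^ q - X : L[X]) ∣ X - X ^ q ^ 3 :=
    dvd_sub_comm.mp (X_pow_sub_X_dvd_X_pow_pow_sub_X q 3)
  have hD : (X ^ q - X : L[X]) ^ q ∣ X ^ q - X ^ q ^ 2 :=
    dvd_sub_comm.mp (X_pow_sub_X_pow_card_dvd_X_pow_pow_succ_sub_X_pow (K := K) 1)
  rw [mul_assoc, mul_comm (X - X ^ q ^ 3 : L[X]), pow_succ]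
  exact dvd_sub (mul_dvd_mul hA hB) (dvd_mul_of_dvd_right (mul_dvd_mul hD hC) _)

/-- `(X^q - X)^{q+1}` divides
`Q(X) = (X^q - X^{q^3})(X - X^{q^2}) - β (X - X^{q^3})(X^q - X^{q^2})` in `F_{q^m}[X]`. -/
theorem pow_frob_dvd_Q {K L : Type*} [Field K] [Fintype K] [Field L] [Fintype L]
    [Algebra K L] (β : L) :
    ((X ^ Fintype.card K - X) ^ (Fintype.card K + 1) : L[X])
      ∣ ((X ^ Fintype.card K - X ^ Fintype.card K ^ 3) * (X - X ^ Fintype.card K ^ 2)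
          - C β * (X - X ^ Fintype.card K ^ 3) * (X ^ Fintype.card K - X ^ Fintype.card K ^ 2)) :=
  pow_frob_dvd_Q_general β
end

section
/- Fix 1 ≤ t ≤ k−1 and s ≥ t−1. The set E_t of (s+1)-tuples (x_0,...,x_s) ∈ (F_{q^m}^n)^{s+1} satisfying x_0 + x_1^{[1]} + ... + x_s^{[s]} = 0 and dim_{F_{q^m}} ⟨x_0,...,x_s⟩ = t has cardinality at most C · q^{(mt+n)(s+1−t) + mn(t−1)}, where C is the constant from the Gaussian binomial bound over F_{q^m}. -/
open Module Polynomial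

/-- The Gaussian binomial coefficient `[n choose k]_Q = ∏_{t<k} (Q^n - Q^t)/(Q^k - Q^t)`,
as a real number. -/
noncomputable def gaussBinom (Q n k : ℕ) : ℝ :=
  ∏ t ∈ Finset.range k, ((Q : ℝ) ^ n - (Q : ℝ) ^ t) / ((Q : ℝ) ^ k - (Q : ℝ) ^ t)

/-!
After transposing, a tuple in `E_t` is an `n`-tuple of columns spanning a `t`-dimensional
subspace `W ⊆ L^{s+1}`, each column lying in the kernel of the additive map
`φ w = ∑ wᵢ^{q^i}`. A dimension count gives `v ∈ W`, `v ≠ 0`, with `vᵢ = 0` for `i > s + 1 - t`;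
then `ker φ ∩ L v` is the set of `a v` with `a` a root of a nonzero `q`-polynomial of degree at
most `q^{s+1-t}`, and comparing `ker φ ∩ W` with `W / L v` gives
`|ker φ ∩ W| ≤ Q^{t-1} q^{s+1-t}`, where `Q = q^m`. Summing over the `[s+1 choose t]_Q`
subspaces `W` gives the bound.
-/
theorem AddMonoidHom.card_ker_mul_card_le {A B C : Type*} [AddCommGroup A] [AddCommGroup B]
    [AddGroup C] [Finite A] [Finite B] (g : A →+ B) (ψ : B →+ C) :
    Nat.card ψ.ker * Nat.card A ≤ Nat.card (ψ.comp g).ker * Nat.card B := by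
  -- `Φ (z, a) = z + g a`; its kernel embeds into `ker (ψ ∘ g)` by `(z, a) ↦ a`.
  set Φ : ψ.ker × A →+ B := ψ.ker.subtype.coprod g
  have hΦ : ∀ p, Φ p = p.1 + g p.2 := fun _ => rfl
  have hker : Nat.card Φ.ker ≤ Nat.card (ψ.comp g).ker := by
    have hfst : ∀ p : Φ.ker, (p.1.1 : B) = -g p.1.2 := fun p =>
      eq_neg_of_add_eq_zero_left ((hΦ p).symm.trans p.2)
    refine Nat.card_le_card_of_injective
      (fun p => ⟨p.1.2, by
        rw [AddMonoidHom.mem_ker, AddMonoidHom.comp_apply, ← neg_neg (g _), ← hfst p, map_neg,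
          AddMonoidHom.mem_ker.mp p.1.1.2, neg_zero]⟩) fun p p' h => ?_
    have h2 : p.1.2 = p'.1.2 := congrArg Subtype.val h
    exact Subtype.ext (Prod.ext (Subtype.ext (by rw [hfst, hfst, h2])) h2)
  calc Nat.card ψ.ker * Nat.card A
      = Nat.card Φ.ker * Nat.card Φ.range := by
        rw [← Nat.card_prod, ← AddSubgroup.index_ker, AddSubgroup.card_mul_index]
    _ ≤ Nat.card (ψ.comp g).ker * Nat.card B :=
        Nat.mul_le_mul hker (Nat.card_le_card_of_injective _ Subtype.coe_injective)

theorem Submodule.exists_mem_ne_zero_tail_eq_zero {F : Type*} [Field F] {N : ℕ}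
    (W : Submodule F (Fin N → F)) (hW : 0 < finrank F W) :
    ∃ v ∈ W, v ≠ 0 ∧ ∀ i : Fin N, N - finrank F W < i → v i = 0 := by
  set d := finrank F W
  set I := {i : Fin N // N - d < i}
  have hI : finrank F (I → F) < d := by
    have hcard := Fintype.card_le_of_injective (β := Fin (d - 1))
      (fun i : I => ⟨i.1 - (N - d) - 1, by have := i.2; have := i.1.2; omega⟩) fun i j h => by
        have := i.2; have := j.2
        exact Subtype.ext (Fin.ext (by simp only [Fin.mk.injEq] at h; omega))
    rw [Module.finrank_fintype_fun_eq_card]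
    rw [Fintype.card_fin] at hcard
    omega
  set r : W →ₗ[F] (I → F) := (LinearMap.funLeft F F Subtype.val).comp W.subtype
  obtain ⟨w, hw, hw0⟩ :=
    Submodule.exists_mem_ne_zero_of_ne_bot (LinearMap.ker_ne_bot_of_finrank_lt (f := r) hI)
  exact ⟨w, w.2, fun h => hw0 (Subtype.ext h),
    fun i hi => congrFun (LinearMap.mem_ker.mp hw) ⟨i, hi⟩⟩

theorem card_tuples_finrank_span_le {F V : Type*} [Field F] [AddCommGroup V] [Module F V]
    [Finite V] (P : V → Prop) {n t B : ℕ}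
    (hB : ∀ W : Submodule F V, finrank F W = t → Nat.card {w : W // P w} ≤ B) :
    Nat.card {y : Fin n → V // finrank F (Submodule.span F (Set.range y)) = t ∧ ∀ j, P (y j)}
      ≤ Nat.card {W : Submodule F V // finrank F W = t} * B ^ n := by
  have : Finite (Submodule F V) := Finite.of_injective _ SetLike.coe_injective
  have := Fintype.ofFinite {W : Submodule F V // finrank F W = t}
  set E := {y : Fin n → V // finrank F (Submodule.span F (Set.range y)) = t ∧ ∀ j, P (y j)}
  set f : E → {W : Submodule F V // finrank F W = t} := fun y => ⟨_, y.2.1⟩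
  have hfiber : ∀ W, Nat.card {y // f y = W} ≤ B ^ n := fun W => by
    have hmem : ∀ (y : {y // f y = W}) j, y.1.1 j ∈ W.1 := fun y j =>
      (congrArg Subtype.val y.2).le (Submodule.subset_span (Set.mem_range_self j))
    calc Nat.card {y // f y = W}
        ≤ Nat.card (Fin n → {w : W.1 // P w}) := Nat.card_le_card_of_injective
          (fun y j => ⟨⟨y.1.1 j, hmem y j⟩, y.1.2.2 j⟩) fun y y' h =>
            Subtype.ext <| Subtype.ext <| funext fun j =>
              congrArg (fun x => (x.1 : V)) (congrFun h j)
      _ ≤ B ^ n := by rw [Nat.card_fun, Nat.card_fin]; exact Nat.pow_le_pow_left (hB W W.2) n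
  calc Nat.card E = ∑ W, Nat.card {y // f y = W} := by
        rw [← Nat.card_sigma, Nat.card_congr (Equiv.sigmaFiberEquiv f)]
    _ ≤ ∑ _W, B ^ n := Finset.sum_le_sum fun W _ => hfiber W
    _ = _ := by simp [Nat.card_eq_fintype_card]

section SubspaceCount

variable (F V : Type*) [Field F] [Fintype F] [AddCommGroup V] [Module F V] [Finite V]

local notation "Q" => Fintype.card F

/-- Linearly independent `t`-tuples in `V`, grouped by the subspace they span. -/
theorem card_submodule_finrank_mul_prod {t : ℕ} (ht : t ≤ finrank F V) :
    Nat.card {W : Submodule F V // finrank F W = t} * ∏ i : Fin t, (Q ^ t - Q ^ (i : ℕ))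
      = ∏ i : Fin t, (Q ^ finrank F V - Q ^ (i : ℕ)) := by
  have : Finite (Submodule F V) := Finite.of_injective _ SetLike.coe_injective
  have := Fintype.ofFinite {W : Submodule F V // finrank F W = t}
  set A := {s : Fin t → V // LinearIndependent F s}
  set G : A → {W : Submodule F V // finrank F W = t} := fun s =>
    ⟨Submodule.span F (Set.range s.1), by rw [finrank_span_eq_card s.2, Fintype.card_fin]⟩
  have hfiber : ∀ W, Nat.card {s // G s = W} = ∏ i : Fin t, (Q ^ t - Q ^ (i : ℕ)) := by
    rintro ⟨W, hW⟩
    have hli : ∀ s : {s // G s = ⟨W, hW⟩}, Submodule.span F (Set.range s.1.1) = W :=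
      fun s => congrArg Subtype.val s.2
    let e : {s // G s = ⟨W, hW⟩} ≃ {g : Fin t → W // LinearIndependent F g} :=
      { toFun := fun s =>
          ⟨fun j => ⟨s.1.1 j, (hli s).le (Submodule.subset_span (Set.mem_range_self j))⟩,
            .of_comp W.subtype s.1.2⟩
        invFun := fun g => ⟨⟨W.subtype ∘ g.1, g.2.map' _ W.ker_subtype⟩, Subtype.ext <| by
          simp only [G, Set.range_comp, Submodule.span_image,
            g.2.span_eq_top_of_card_eq_finrank' (by rw [Fintype.card_fin, hW]),
            Submodule.map_top, Submodule.range_subtype]⟩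
        left_inv := fun _ => rfl
        right_inv := fun _ => rfl }
    rw [Nat.card_congr e, card_linearIndependent hW.ge, hW]
  calc Nat.card {W : Submodule F V // finrank F W = t} * ∏ i : Fin t, (Q ^ t - Q ^ (i : ℕ))
      = ∑ W, Nat.card {s // G s = W} := by simp [hfiber, Nat.card_eq_fintype_card]
    _ = Nat.card A := by rw [← Nat.card_sigma, Nat.card_congr (Equiv.sigmaFiberEquiv G)]
    _ = _ := card_linearIndependent ht

theorem natCard_submodule_finrank_eq_gaussBinom {t : ℕ} (ht : t ≤ finrank F V) :
    (Nat.card {W : Submodule F V // finrank F W = t} : ℝ) = gaussBinom Q (finrank F V) t := by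
  have hQ : 1 < Q := Fintype.one_lt_card
  have hcast : ∀ d, t ≤ d → ((∏ i : Fin t, (Q ^ d - Q ^ (i : ℕ)) : ℕ) : ℝ)
      = ∏ i ∈ Finset.range t, ((Q : ℝ) ^ d - Q ^ i) :=
    fun d hd => by
      rw [Nat.cast_prod, Fin.prod_univ_eq_prod_range (fun i => ((Q ^ d - Q ^ i : ℕ) : ℝ))]
      refine Finset.prod_congr rfl fun i hi => ?_
      rw [Nat.cast_sub (Nat.pow_le_pow_right hQ.le (by simp at hi; omega))]
      push_cast; rfl
  have hne : ∏ i ∈ Finset.range t, ((Q : ℝ) ^ t - Q ^ i) ≠ 0 :=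
    Finset.prod_ne_zero_iff.mpr fun i hi => sub_ne_zero.mpr
      (pow_lt_pow_right₀ (by exact_mod_cast hQ) (Finset.mem_range.mp hi)).ne'
  rw [gaussBinom, Finset.prod_div_distrib, eq_div_iff hne, ← hcast t le_rfl, ← hcast _ ht,
    ← Nat.cast_mul, card_submodule_finrank_mul_prod F V ht]

end SubspaceCount

section Frobenius

variable (K : Type*) {L : Type*} [Field K] [Fintype K]

local notation "q" => Fintype.card K

theorem add_pow_card_pow [CommRing L] [Algebra K L] (a b : L) (j : ℕ) :
    (a + b) ^ q ^ j = a ^ q ^ j + b ^ q ^ j := by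
  have := map_add (FiniteField.frobeniusAlgHom K L ^ j) a b
  simpa only [AlgHom.coe_pow, FiniteField.coe_frobeniusAlgHom, pow_iterate] using this

def frobSum [CommRing L] [Algebra K L] (N : ℕ) : (Fin N → L) →+ L :=
  AddMonoidHom.mk' (fun w => ∑ i, w i ^ q ^ (i : ℕ)) fun v w => by
    simp only [Pi.add_apply, add_pow_card_pow, Finset.sum_add_distrib]

theorem frobSum_apply [CommRing L] [Algebra K L] {N : ℕ} (w : Fin N → L) :
    frobSum K N w = ∑ i, w i ^ q ^ (i : ℕ) := rfl

theorem ncard_frobV_sum_eq_natCard_columns [Field L] [Algebra K L] (n N t : ℕ) :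
    Set.ncard {x : Fin N → Fin n → L |
        ∑ i : Fin N, frobV (Fintype.card K) i.1 (x i) = 0 ∧
        finrank L (Submodule.span L (Set.range x)) = t}
      = Nat.card {y : Fin n → Fin N → L //
          finrank L (Submodule.span L (Set.range y)) = t ∧ ∀ j, frobSum K N (y j) = 0} := by
  rw [← Nat.card_coe_set_eq]
  refine Nat.card_congr ((Equiv.piComm _).subtypeEquiv fun x => ?_)
  have hrank : finrank L (Submodule.span L (Set.range x))
      = finrank L (Submodule.span L (Set.range (Equiv.piComm _ x))) :=
    (Matrix.of x).rank_eq_finrank_span_row.symm.trans (Matrix.of x).rank_eq_finrank_span_cols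
  rw [Set.mem_ofPred_eq, hrank, funext_iff, and_comm]
  simp only [Finset.sum_apply]
  rfl

variable {K} [Field L] [Fintype L] [Algebra K L]

theorem card_frobSum_smul_eq_zero_le {N ℓ : ℕ} {v : Fin N → L} (hv : v ≠ 0)
    (hℓ : ∀ i : Fin N, ℓ < i → v i = 0) :
    Nat.card {a : L // frobSum K N (a • v) = 0} ≤ q ^ ℓ := by
  classical
  have hq : 1 < q := Fintype.one_lt_card
  set P : L[X] := ∑ i, C (v i ^ q ^ (i : ℕ)) * X ^ q ^ (i : ℕ)
  have heval : ∀ a, P.eval a = frobSum K N (a • v) := fun a => by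
    simp [P, frobSum_apply, eval_finsetSum, mul_pow, mul_comm]
  have hP : P ≠ 0 := by
    obtain ⟨j, hj⟩ := Function.ne_iff.mp hv
    refine ne_of_apply_ne (coeff · (q ^ (j : ℕ))) ?_
    have hinj : ∀ i : Fin N, q ^ (j : ℕ) = q ^ (i : ℕ) ↔ j = i := fun i =>
      (Nat.pow_right_injective hq).eq_iff.trans Fin.val_inj
    simp only [P, finsetSum_coeff, coeff_C_mul_X_pow, hinj, Finset.sum_ite_eq, Finset.mem_univ,
      if_true, coeff_zero]
    exact pow_ne_zero _ hj
  have hdeg : P.natDegree ≤ q ^ ℓ := by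
    refine natDegree_sum_le_of_forall_le _ _ fun i _ => ?_
    by_cases hi : ℓ < i
    · simp [hℓ i hi, zero_pow (pow_pos (by omega : 0 < q) _).ne']
    · exact (natDegree_C_mul_X_pow_le _ _).trans (Nat.pow_le_pow_right (by omega) (by omega))
  calc Nat.card {a : L // frobSum K N (a • v) = 0}
      = (Finset.univ.filter fun a => P.eval a = 0).card := by
        simp [heval, Nat.card_eq_fintype_card, Fintype.card_subtype]
    _ ≤ P.natDegree := card_le_degree_of_subset_roots fun a ha => by
        simpa [mem_roots hP] using ha
    _ ≤ q ^ ℓ := hdeg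

theorem card_frobSum_eq_zero_le {N : ℕ} (W : Submodule L (Fin N → L)) (hW : 0 < finrank L W) :
    Nat.card {w : W // frobSum K N (w : Fin N → L) = 0}
      ≤ Nat.card L ^ (finrank L W - 1) * Fintype.card K ^ (N - finrank L W) := by
  obtain ⟨v, hvW, hv, hvl⟩ := W.exists_mem_ne_zero_tail_eq_zero hW
  set ψ := (frobSum K N).comp W.subtype.toAddMonoidHom
  set g := (LinearMap.toSpanSingleton L W ⟨v, hvW⟩).toAddMonoidHom
  have hline : Nat.card (ψ.comp g).ker ≤ Fintype.card K ^ (N - finrank L W) :=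
    card_frobSum_smul_eq_zero_le hv hvl
  have hcardW : Nat.card W = Nat.card L ^ (finrank L W - 1) * Nat.card L := by
    rw [Module.natCard_eq_pow_finrank (K := L), ← pow_succ, Nat.sub_add_cancel hW]
  refine Nat.le_of_mul_le_mul_right ?_ (Nat.card_pos (α := L))
  calc Nat.card {w : W // frobSum K N (w : Fin N → L) = 0} * Nat.card L
      = Nat.card ψ.ker * Nat.card L := rfl
    _ ≤ Nat.card (ψ.comp g).ker * Nat.card W := AddMonoidHom.card_ker_mul_card_le g ψ
    _ ≤ Fintype.card K ^ (N - finrank L W) * Nat.card W := Nat.mul_le_mul_right _ hline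
    _ = _ := by rw [hcardW]; ring

end Frobenius

theorem card_Et_bound_general {K L : Type*} [Field K] [Fintype K] [Field L] [Fintype L]
    [Algebra K L] (m n s t : ℕ) (hm : Fintype.card L = Fintype.card K ^ m)
    (ht1 : 1 ≤ t) (hts : t ≤ s + 1)
    (C : ℝ)
    (hC : ∀ a b : ℕ, b ≤ a →
      gaussBinom (Fintype.card L) a b ≤ C * (Fintype.card L : ℝ) ^ (b * (a - b))) :
    (Set.ncard {x : Fin (s + 1) → Fin n → L |
        ∑ i : Fin (s + 1), frobV (Fintype.card K) i.1 (x i) = 0 ∧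
        Module.finrank L ↥(Submodule.span L (Set.range x)) = t} : ℝ)
      ≤ C * (Fintype.card K : ℝ) ^ ((m * t + n) * (s + 1 - t) + m * n * (t - 1)) := by
  set B := Fintype.card L ^ (t - 1) * Fintype.card K ^ (s + 1 - t)
  have hcount := card_tuples_finrank_span_le (n := n) (B := B)
    (fun y : Fin (s + 1) → L => frobSum K (s + 1) y = 0) fun W hW => by
      simpa only [hW, Nat.card_eq_fintype_card] using card_frobSum_eq_zero_le W (by omega)
  have hsubspaces : (Nat.card {W : Submodule L (Fin (s + 1) → L) // finrank L W = t} : ℝ)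
      ≤ C * (Fintype.card L : ℝ) ^ (t * (s + 1 - t)) := by
    rw [natCard_submodule_finrank_eq_gaussBinom _ _ (by simpa using hts), finrank_fin_fun]
    exact hC _ _ hts
  rw [ncard_frobV_sum_eq_natCard_columns]
  calc _ ≤ (Nat.card {W : Submodule L (Fin (s + 1) → L) // finrank L W = t} : ℝ) * B ^ n := by
        exact_mod_cast hcount
    _ ≤ C * (Fintype.card L : ℝ) ^ (t * (s + 1 - t)) * B ^ n := by gcongr
    _ = C * (Fintype.card K : ℝ) ^ ((m * t + n) * (s + 1 - t) + m * n * (t - 1)) := by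
        simp only [B, hm]
        push_cast
        ring

/-- The set `E_t` of `(s+1)`-tuples `(x_0, …, x_s)` with
`x_0 + x_1^{[1]} + ⋯ + x_s^{[s]} = 0` whose span has dimension `t` has cardinality at most
`C q^{(mt+n)(s+1-t) + mn(t-1)}`, for any constant `C` satisfying the Gaussian binomial
upper bound over `q^m`. -/
theorem card_Et_bound {K L : Type*} [Field K] [Fintype K] [Field L] [Fintype L]
    [Algebra K L] (m n k s t : ℕ) (hm : Fintype.card L = Fintype.card K ^ m)
    (ht1 : 1 ≤ t) (htk : t + 1 ≤ k) (hts : t ≤ s + 1) (hn : n ≤ m)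
    (C : ℝ)
    (hC : ∀ a b : ℕ, b ≤ a →
      gaussBinom (Fintype.card L) a b ≤ C * (Fintype.card L : ℝ) ^ (b * (a - b))) :
    (Set.ncard {x : Fin (s + 1) → Fin n → L |
        ∑ i : Fin (s + 1), frobV (Fintype.card K) i.1 (x i) = 0 ∧
        Module.finrank L ↥(Submodule.span L (Set.range x)) = t} : ℝ)
      ≤ C * (Fintype.card K : ℝ) ^ ((m * t + n) * (s + 1 - t) + m * n * (t - 1)) :=
  card_Et_bound_general m n s t hm ht1 hts C hC
end
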